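/- A signed graph is balanced (contains no negative cycle) if and only if there exists a subset S of its vertices such that switching at all vertices of S makes every edge positive; equivalently, if and only if the set of negative edges forms an edge cut. -/

import Mathlib

/-!
A negative closed walk that is not a cycle either backtracks along an edge or splits at a
repeated vertex into two shorter closed walks whose signs multiply to its sign, so by
induction on length some negative closed walk is a cycle. In a balanced graph all walks
between two vertices therefore have the same sign, and switching at the vertices reached
from a fixed root of their component by a negative walk makes every edge positive.
Conversely, after such a switching the sign of a walk depends only on its endpoints, so
closed walks are positive. Finally, switching at `S` makes every edge positive exactly when
the negative edges are those crossing the cut of `S`.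
-/

/-- A signed (multi)graph: an edge set with endpoints (an unordered pair,
possibly a loop) and a sign for each edge (`neg e = true` means `e` is negative). -/
structure SGraph (V : Type) where
  E : Type
  ends : E → Sym2 V
  neg : E → Bool

namespace SGraph

variable {V W : Type}

/-- Walks in a signed multigraph, recorded as sequences of edges. -/
inductive Walk (G : SGraph V) : V → V → Type where
  | nil {v : V} : Walk G v v
  | cons {u v w : V} (e : G.E) (h : G.ends e = s(u, v)) (p : Walk G v w) : Walk G u w

namespace Walk

variable {G : SGraph V}

/-- The list of edges of a walk. -/
def edges : {u v : V} → G.Walk u v → List G.E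
  | _, _, .nil => []
  | _, _, .cons e _ p => e :: p.edges

/-- The list of vertices visited by a walk (in order, with repetitions). -/
def support : {u v : V} → G.Walk u v → List V
  | u, _, .nil => [u]
  | u, _, .cons _ _ p => u :: p.support

/-- A walk is negative if it uses an odd number of negative edges
(its sign, the product of the signs of its edges with multiplicity, is `-1`). -/
def isNeg {u v : V} (p : G.Walk u v) : Bool :=
  (p.edges.map G.neg).foldr Bool.xor false

/-- A closed walk is a cycle if it has at least one edge, no repeated edge,
and no repeated vertex (except the initial vertex which is also final). -/
def IsCycle {v : V} (p : G.Walk v v) : Prop :=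
  p.edges ≠ [] ∧ p.edges.Nodup ∧ p.support.tail.Nodup

/-- The internal vertices of a walk. -/
def inner {u v : V} (p : G.Walk u v) : List V :=
  p.support.tail.dropLast

end Walk

/-- A set of vertices is balanced if it induces no negative cycle. -/
def BalancedSet (G : SGraph V) (X : Set V) : Prop :=
  ∀ (v : V) (p : G.Walk v v), p.IsCycle → (∀ u ∈ p.support, u ∈ X) → p.isNeg = false

/-- A signed graph is balanced if it contains no negative cycle. -/
def IsBalanced (G : SGraph V) : Prop := G.BalancedSet Set.univ

/-- The signed graph has a negative loop. -/
def HasNegLoop (G : SGraph V) : Prop :=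
  ∃ e : G.E, (∃ v : V, G.ends e = s(v, v)) ∧ G.neg e = true

/-- The signed graph has a positive loop. -/
def HasPosLoop (G : SGraph V) : Prop :=
  ∃ e : G.E, (∃ v : V, G.ends e = s(v, v)) ∧ G.neg e = false

/-- A balanced `k`-coloring: a partition of the vertices into `k` balanced color classes. -/
def ColorableB (G : SGraph V) (k : ℕ) : Prop :=
  ∃ c : V → Fin k, ∀ i : Fin k, G.BalancedSet {v | c v = i}

/-- The balanced chromatic number. -/
noncomputable def chromNumB (G : SGraph V) : ℕ∞ :=
  ⨅ n ∈ {n : ℕ | G.ColorableB n}, (n : ℕ∞)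

/-- Switching at the set of vertices where `s` is `true`: the sign of an edge is
multiplied by `-1` once for each of its endpoints (with multiplicity) in the set;
thus an edge with exactly one endpoint in the set changes sign, and loops are unchanged. -/
def switch (G : SGraph V) (s : V → Bool) : SGraph V where
  E := G.E
  ends := G.ends
  neg e := Bool.xor (G.neg e)
    (Sym2.lift ⟨fun u v => Bool.xor (s u) (s v), fun u v => Bool.xor_comm _ _⟩ (G.ends e))

/-- The negation of a signature. -/
def negate (G : SGraph V) : SGraph V where
  E := G.E
  ends := G.ends
  neg e := !(G.neg e)

/-- A set of vertices is connected via positive edges inside itself. -/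
def PosConnected (G : SGraph V) (B : Set V) : Prop :=
  B.Nonempty ∧ ∀ u ∈ B, ∀ v ∈ B, ∃ p : G.Walk u v,
    (∀ x ∈ p.support, x ∈ B) ∧ ∀ e ∈ p.edges, G.neg e = false

/-- `H` is a minor of `G`: after a suitable switching of `G`, there are disjoint
branch sets (each connected via positive edges) for the vertices of `H`, and
distinct edges of `G`, with the correct signs, realizing the edges of `H`. -/
def IsMinor (H : SGraph W) (G : SGraph V) : Prop :=
  ∃ s : V → Bool, ∃ B : W → Set V,
    (∀ x : W, (G.switch s).PosConnected (B x)) ∧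
    (Pairwise fun x y => Disjoint (B x) (B y)) ∧
    ∃ η : H.E → G.E, Function.Injective η ∧
      ∀ (e : H.E) (x y : W), H.ends e = s(x, y) →
        (G.switch s).neg (η e) = H.neg e ∧
        ∃ u v : V, G.ends (η e) = s(u, v) ∧ u ∈ B x ∧ v ∈ B y

/-- A homomorphism of signed graphs: after a suitable switching of the source,
a map of vertices and edges preserving incidences and signs. -/
def HomTo (G : SGraph V) (H : SGraph W) : Prop :=
  ∃ s : V → Bool, ∃ f : V → W, ∃ g : G.E → H.E,
    ∀ (e : G.E) (u v : V), G.ends e = s(u, v) →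
      H.ends (g e) = s(f u, f v) ∧ H.neg (g e) = (G.switch s).neg e

/-- A subdivision of `H` is isomorphic to a subgraph of `G` (signs ignored):
an injection of the vertices of `H` together with internally disjoint,
edge-disjoint paths of `G` realizing the edges of `H`. -/
def IsSubdivisionOf (H : SGraph W) (G : SGraph V) : Prop :=
  ∃ (φ : W → V) (ep : H.E → W × W),
    Function.Injective φ ∧
    (∀ e : H.E, H.ends e = s((ep e).1, (ep e).2)) ∧
    ∃ P : (e : H.E) → G.Walk (φ (ep e).1) (φ (ep e).2),
      (∀ e, (P e).support.Nodup) ∧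
      (∀ e f, e ≠ f → ∀ x ∈ (P e).inner, x ∉ (P f).support) ∧
      (∀ e, ∀ x ∈ (P e).inner, x ∉ Set.range φ) ∧
      (∀ e f, e ≠ f → ∀ g ∈ (P e).edges, g ∉ (P f).edges)

/-- `H` is a total topological minor of `G`: a subdivision of `H` occurs as a
subgraph of `G` in which the path representing each edge `e` of `H` has sign
exactly the sign of `e`. -/
def IsTotalTopMinor (H : SGraph W) (G : SGraph V) : Prop :=
  ∃ (φ : W → V) (ep : H.E → W × W),
    Function.Injective φ ∧
    (∀ e : H.E, H.ends e = s((ep e).1, (ep e).2)) ∧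
    ∃ P : (e : H.E) → G.Walk (φ (ep e).1) (φ (ep e).2),
      (∀ e, (P e).support.Nodup) ∧
      (∀ e f, e ≠ f → ∀ x ∈ (P e).inner, x ∉ (P f).support) ∧
      (∀ e, ∀ x ∈ (P e).inner, x ∉ Set.range φ) ∧
      (∀ e f, e ≠ f → ∀ g ∈ (P e).edges, g ∉ (P f).edges) ∧
      (∀ e, (P e).isNeg = H.neg e)

/-- `H` is a topological minor of `G`: some subdivision of `H` occurs as a subgraph
of `G` in which every cycle of `H` keeps its sign; equivalently, after a suitable
switching of `H`, `H` is a total topological minor of `G`. -/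
def IsTopMinor (H : SGraph W) (G : SGraph V) : Prop :=
  ∃ s : W → Bool, (H.switch s).IsTotalTopMinor G

end SGraph

open SGraph

/-- The signed graph `G̃` obtained from a graph `G` by replacing each edge by a
pair of parallel edges, one positive and one negative. -/
def SimpleGraph.tildeS {V : Type} (G : SimpleGraph V) : SGraph V where
  E := G.edgeSet × Bool
  ends e := (e.1 : Sym2 V)
  neg e := e.2

/-- The all-negative signed graph `(G, -)` on a graph `G`. -/
def SimpleGraph.allNeg {V : Type} (G : SimpleGraph V) : SGraph V where
  E := G.edgeSet
  ends e := (e : Sym2 V)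
  neg _ := true

/-- `K̃_k`: the signed graph on `k` vertices with a positive and a negative edge
between each pair of distinct vertices. -/
def tildeK (k : ℕ) : SGraph (Fin k) := (⊤ : SimpleGraph (Fin k)).tildeS

/-- `(K_k, -)`: the all-negative complete signed graph on `k` vertices. -/
def allNegK (k : ℕ) : SGraph (Fin k) := (⊤ : SimpleGraph (Fin k)).allNeg

/-- `K̃_k⁺`: as `K̃_k`, with in addition a positive loop at every vertex. -/
def tildeKplus (k : ℕ) : SGraph (Fin k) where
  E := ((⊤ : SimpleGraph (Fin k)).edgeSet × Bool) ⊕ Fin k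
  ends := Sum.elim (fun e => (e.1 : Sym2 (Fin k))) (fun i => s(i, i))
  neg := Sum.elim (fun e => e.2) (fun _ => false)

/-- `G` has a `K_k`-minor: `k` disjoint connected branch sets, pairwise joined by an edge. -/
def SimpleGraph.HasCliqueMinor {V : Type} (G : SimpleGraph V) (k : ℕ) : Prop :=
  ∃ T : Fin k → G.Subgraph,
    (∀ i, (T i).coe.Connected) ∧
    (Pairwise fun i j => Disjoint (T i).verts (T j).verts) ∧
    ∀ i j, i ≠ j → ∃ u v, G.Adj u v ∧ u ∈ (T i).verts ∧ v ∈ (T j).verts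

/-- `G` has an odd-`K_k`-minor: a 2-coloring of the vertices together with `k`
disjoint trees, all of whose edges are properly colored, pairwise joined by a
monochromatic edge. -/
def SimpleGraph.HasOddCliqueMinor {V : Type} (G : SimpleGraph V) (k : ℕ) : Prop :=
  ∃ c : V → Bool, ∃ T : Fin k → G.Subgraph,
    (∀ i, (T i).coe.IsTree) ∧
    (Pairwise fun i j => Disjoint (T i).verts (T j).verts) ∧
    (∀ i, ∀ u v, (T i).Adj u v → c u ≠ c v) ∧
    ∀ i j, i ≠ j →
      ∃ u v, G.Adj u v ∧ u ∈ (T i).verts ∧ v ∈ (T j).verts ∧ c u = c v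

/-- `G` has an even-odd-`K_k`-minor: as an odd-`K_k`-minor, with in addition a
properly colored edge between each pair of distinct trees. -/
def SimpleGraph.HasEvenOddCliqueMinor {V : Type} (G : SimpleGraph V) (k : ℕ) : Prop :=
  ∃ c : V → Bool, ∃ T : Fin k → G.Subgraph,
    (∀ i, (T i).coe.IsTree) ∧
    (Pairwise fun i j => Disjoint (T i).verts (T j).verts) ∧
    (∀ i, ∀ u v, (T i).Adj u v → c u ≠ c v) ∧
    ∀ i j, i ≠ j →
      (∃ u v, G.Adj u v ∧ u ∈ (T i).verts ∧ v ∈ (T j).verts ∧ c u = c v) ∧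
      (∃ u v, G.Adj u v ∧ u ∈ (T i).verts ∧ v ∈ (T j).verts ∧ c u ≠ c v)

/-- The fractional chromatic number of a finite graph: the infimum total weight of
a system of nonnegative weights on independent sets covering every vertex with
total weight at least 1. -/
noncomputable def SimpleGraph.fracChrom {V : Type} [Fintype V] [DecidableEq V]
    (G : SimpleGraph V) : ℝ :=
  sInf {r : ℝ | ∃ w : Finset V → ℝ, (∀ A, 0 ≤ w A) ∧
    (∀ A : Finset V, w A ≠ 0 → (∀ u ∈ A, ∀ v ∈ A, ¬G.Adj u v)) ∧
    (∀ v : V, 1 ≤ ∑ A : Finset V, if v ∈ A then w A else 0) ∧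
    ∑ A : Finset V, w A ≤ r}

/-- The fractional balanced chromatic number of a finite signed graph: the infimum
total weight of a system of nonnegative weights on balanced sets covering every
vertex with total weight at least 1. -/
noncomputable def SGraph.fracChromB {V : Type} [Fintype V] [DecidableEq V]
    (G : SGraph V) : ℝ :=
  sInf {r : ℝ | ∃ w : Finset V → ℝ, (∀ A, 0 ≤ w A) ∧
    (∀ A : Finset V, w A ≠ 0 → G.BalancedSet ↑A) ∧
    (∀ v : V, 1 ≤ ∑ A : Finset V, if v ∈ A then w A else 0) ∧
    ∑ A : Finset V, w A ≤ r}

namespace SGraph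

variable {V : Type} {G : SGraph V}

namespace Walk

def append : {u v w : V} → G.Walk u v → G.Walk v w → G.Walk u w
  | _, _, _, .nil, q => q
  | _, _, _, .cons e h p, q => .cons e h (p.append q)

def reverse : {u v : V} → G.Walk u v → G.Walk v u
  | _, _, .nil => .nil
  | _, _, .cons e h p => p.reverse.append (.cons e (h.trans Sym2.eq_swap) .nil)

def copy {u v u' v' : V} (p : G.Walk u v) (hu : u = u') (hv : v = v') : G.Walk u' v' :=
  hu ▸ hv ▸ p

@[simp] lemma edges_nil {v : V} : (nil : G.Walk v v).edges = [] := rfl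

@[simp] lemma edges_cons {u v w : V} (e : G.E) (h : G.ends e = s(u, v)) (p : G.Walk v w) :
    (cons e h p).edges = e :: p.edges := rfl

@[simp] lemma support_cons {u v w : V} (e : G.E) (h : G.ends e = s(u, v)) (p : G.Walk v w) :
    (cons e h p).support = u :: p.support := rfl

@[simp] lemma isNeg_nil {v : V} : (nil : G.Walk v v).isNeg = false := rfl

@[simp] lemma isNeg_cons {u v w : V} (e : G.E) (h : G.ends e = s(u, v)) (p : G.Walk v w) :
    (cons e h p).isNeg = (G.neg e ^^ p.isNeg) := rfl

@[simp] lemma cons_append {u v w x : V} (e : G.E) (h : G.ends e = s(u, v)) (p : G.Walk v w)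
    (q : G.Walk w x) : (cons e h p).append q = cons e h (p.append q) := rfl

@[simp] lemma nil_append {u v : V} (p : G.Walk u v) : nil.append p = p := rfl

@[simp] lemma edges_append {u v w : V} (p : G.Walk u v) (q : G.Walk v w) :
    (p.append q).edges = p.edges ++ q.edges := by
  induction p with
  | nil => rfl
  | cons e h p ih => simp [ih]

@[simp] lemma isNeg_append {u v w : V} (p : G.Walk u v) (q : G.Walk v w) :
    (p.append q).isNeg = (p.isNeg ^^ q.isNeg) := by
  induction p with
  | nil => simp
  | cons e h p ih => simp [ih]

@[simp] lemma isNeg_reverse {u v : V} (p : G.Walk u v) : p.reverse.isNeg = p.isNeg := by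
  induction p with
  | nil => rfl
  | cons e h p ih => simp [reverse, ih, Bool.xor_comm]

@[simp] lemma isNeg_copy {u v u' v' : V} (p : G.Walk u v) (hu : u = u') (hv : v = v') :
    (p.copy hu hv).isNeg = p.isNeg := by
  subst hu hv; rfl

lemma start_mem_support {u v : V} (p : G.Walk u v) : u ∈ p.support := by
  cases p <;> simp [support]

lemma mem_support_of_mem_edges {u v x : V} {e : G.E} (p : G.Walk u v) (he : e ∈ p.edges)
    (hx : x ∈ G.ends e) : x ∈ p.support := by
  induction p with
  | nil => simp at he
  | cons f hf p ih =>
    simp only [edges_cons, List.mem_cons] at he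
    rcases he with rfl | he
    · rw [hf, Sym2.mem_iff] at hx
      rcases hx with rfl | rfl
      · simp
      · simp [p.start_mem_support]
    · simp [ih he]

lemma edges_nodup_of_support_nodup {u v : V} (p : G.Walk u v) (hp : p.support.Nodup) :
    p.edges.Nodup := by
  induction p with
  | nil => simp
  | cons e h p ih =>
    rw [support_cons, List.nodup_cons] at hp
    exact List.nodup_cons.2
      ⟨fun he => hp.1 (p.mem_support_of_mem_edges he (by simp [h])), ih hp.2⟩

lemma exists_eq_cons_of_mem_edges {u v : V} {e : G.E} (p : G.Walk u v) (hp : p.support.Nodup)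
    (he : e ∈ p.edges) (hu : u ∈ G.ends e) :
    ∃ (w : V) (h : G.ends e = s(u, w)) (q : G.Walk w v), p = cons e h q := by
  cases p with
  | nil => simp at he
  | cons f hf q =>
    rw [support_cons, List.nodup_cons] at hp
    rw [edges_cons, List.mem_cons] at he
    rcases he with rfl | he
    · exact ⟨_, hf, q, rfl⟩
    · exact absurd (q.mem_support_of_mem_edges he hu) hp.1

lemma exists_append_eq_of_mem_support {u v x : V} (p : G.Walk u v) (hx : x ∈ p.support) :
    ∃ (p₁ : G.Walk u x) (p₂ : G.Walk x v), p₁.append p₂ = p := by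
  induction p with
  | nil =>
    obtain rfl : x = _ := List.mem_singleton.1 hx
    exact ⟨nil, nil, rfl⟩
  | cons e h p ih =>
    rw [support_cons, List.mem_cons] at hx
    rcases hx with rfl | hx
    · exact ⟨nil, _, rfl⟩
    · obtain ⟨p₁, p₂, rfl⟩ := ih hx
      exact ⟨cons e h p₁, p₂, rfl⟩

lemma exists_closed_subwalk_of_not_nodup {u v : V} (p : G.Walk u v) (hp : ¬p.support.Nodup) :
    ∃ (x : V) (p₁ : G.Walk u x) (c : G.Walk x x) (p₂ : G.Walk x v),
      c.edges ≠ [] ∧ p₁.append (c.append p₂) = p := by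
  induction p with
  | nil => simp [support] at hp
  | cons e h p ih =>
    rw [support_cons, List.nodup_cons, not_and_or, not_not] at hp
    rcases hp with hu | hp
    · obtain ⟨p₁, p₂, rfl⟩ := p.exists_append_eq_of_mem_support hu
      exact ⟨_, nil, cons e h p₁, p₂, by simp, rfl⟩
    · obtain ⟨x, p₁, c, p₂, hc, rfl⟩ := ih hp
      exact ⟨x, cons e h p₁, c, p₂, hc, rfl⟩

theorem exists_isCycle_isNeg {v : V} (p : G.Walk v v) (hp : p.isNeg = true) :
    ∃ (u : V) (c : G.Walk u u), c.IsCycle ∧ c.isNeg = true := by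
  induction hn : p.edges.length using Nat.strong_induction_on generalizing v with
  | _ n ih =>
    rcases p with _ | ⟨e, h, q⟩
    · simp at hp
    · subst hn
      by_cases hq : q.support.Nodup
      · by_cases he : e ∈ q.edges
        · -- a path can only meet the edge it left through as its first edge: `p` backtracks
          obtain ⟨x, h', q', rfl⟩ := q.exists_eq_cons_of_mem_edges hq he (by simp [h])
          obtain rfl : x = v := by
            rcases Sym2.eq_iff.1 (h.symm.trans h') with ⟨rfl, rfl⟩ | ⟨rfl, -⟩ <;> rfl
          exact ih _ (by simp) q' (by simpa using hp) rfl
        · exact ⟨v, cons e h q,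
            ⟨by simp, List.nodup_cons.2 ⟨he, q.edges_nodup_of_support_nodup hq⟩, hq⟩, hp⟩
      · obtain ⟨x, q₁, c, q₂, hc, rfl⟩ := q.exists_closed_subwalk_of_not_nodup hq
        have hlen : (q₁.append (c.append q₂)).edges.length
            = (q₁.append q₂).edges.length + c.edges.length := by
          simp only [edges_append, List.length_append]; omega
        have hc_pos := List.length_pos_of_ne_nil hc
        cases hcneg : c.isNeg
        · refine ih _ ?_ (cons e h (q₁.append q₂)) (by simpa [hcneg] using hp) rfl
          simp only [edges_cons, List.length_cons]; omega
        · refine ih _ ?_ c hcneg rfl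
          simp only [edges_cons, List.length_cons]; omega

end Walk

theorem IsBalanced.isNeg_eq_false (hG : G.IsBalanced) {v : V} (p : G.Walk v v) :
    p.isNeg = false := by
  by_contra hp
  obtain ⟨u, c, hc, hneg⟩ := p.exists_isCycle_isNeg (by simpa using hp)
  exact absurd (hG u c hc fun _ _ => trivial) (by simp [hneg])

theorem IsBalanced.isNeg_eq (hG : G.IsBalanced) {u v : V} (p q : G.Walk u v) :
    p.isNeg = q.isNeg := by
  have := hG.isNeg_eq_false (p.append q.reverse)
  simpa [bne_eq_false_iff_eq] using this

lemma switch_neg_of_ends (s : V → Bool) {e : G.E} {u v : V} (h : G.ends e = s(u, v)) :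
    (G.switch s).neg e = (G.neg e ^^ (s u ^^ s v)) := by
  simp only [switch, h, Sym2.lift_mk]

lemma isNeg_eq_xor_of_switch_pos {s : V → Bool} (hs : ∀ e : G.E, (G.switch s).neg e = false)
    {u v : V} (p : G.Walk u v) : p.isNeg = (s u ^^ s v) := by
  induction p with
  | nil => simp
  | @cons u w v e h p ih =>
    have he := hs e
    rw [switch_neg_of_ends s h, bne_eq_false_iff_eq] at he
    rw [Walk.isNeg_cons, ih, he, Bool.xor_assoc, ← Bool.xor_assoc (s w), Bool.xor_self,
      Bool.false_xor]

theorem isBalanced_of_switch_pos {s : V → Bool} (hs : ∀ e : G.E, (G.switch s).neg e = false) :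
    G.IsBalanced := fun _ p _ _ => by simp [isNeg_eq_xor_of_switch_pos hs p]

def reachableSetoid (G : SGraph V) : Setoid V where
  r u v := Nonempty (G.Walk u v)
  iseqv := ⟨fun _ => ⟨.nil⟩, fun ⟨p⟩ => ⟨p.reverse⟩, fun ⟨p⟩ ⟨q⟩ => ⟨p.append q⟩⟩

/-- Switch at the vertices reached by a negative walk from the chosen root of their
component; balance makes this independent of the walk. -/
theorem IsBalanced.exists_switch_pos (hG : G.IsBalanced) :
    ∃ s : V → Bool, ∀ e : G.E, (G.switch s).neg e = false := by
  let root : V → V := fun v => (Quotient.mk G.reachableSetoid v).out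
  let walkFromRoot : ∀ v, G.Walk (root v) v := fun v =>
    (Quotient.mk_out (s := G.reachableSetoid) v).some
  refine ⟨fun v => (walkFromRoot v).isNeg, fun (e : G.E) => ?_⟩
  obtain ⟨⟨u, v⟩, huv⟩ := Sym2.mk_surjective (G.ends e)
  simp only [Function.uncurry_apply_pair] at huv
  have hroot : root u = root v :=
    congrArg Quotient.out (Quotient.sound ⟨.cons e huv.symm .nil⟩)
  have hsign := hG.isNeg_eq
    (((walkFromRoot u).append (.cons e huv.symm .nil)).copy hroot rfl) (walkFromRoot v)
  simp only [Walk.isNeg_copy, Walk.isNeg_append, Walk.isNeg_cons, Walk.isNeg_nil,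
    Bool.xor_false] at hsign
  simp [switch_neg_of_ends _ huv.symm, ← hsign]

theorem isBalanced_iff_exists_switch_pos :
    G.IsBalanced ↔ ∃ s : V → Bool, ∀ e : G.E, (G.switch s).neg e = false :=
  ⟨IsBalanced.exists_switch_pos, fun ⟨_, hs⟩ => isBalanced_of_switch_pos hs⟩

lemma switch_neg_eq_false_iff (s : V → Bool) (e : G.E) :
    (G.switch s).neg e = false ↔
      (G.neg e = true ↔ ∃ u v : V, G.ends e = s(u, v) ∧ s u = true ∧ s v = false) := by
  obtain ⟨⟨u, v⟩, huv⟩ := Sym2.mk_surjective (G.ends e)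
  simp only [Function.uncurry_apply_pair] at huv
  simp only [switch_neg_of_ends s huv.symm, ← huv, Sym2.eq_iff]
  cases G.neg e <;> cases hu : s u <;> cases hv : s v <;> aesop

theorem exists_switch_pos_iff_exists_cut :
    (∃ s : V → Bool, ∀ e : G.E, (G.switch s).neg e = false) ↔
      ∃ S : Set V, ∀ e : G.E,
        (G.neg e = true ↔ ∃ u v : V, G.ends e = s(u, v) ∧ u ∈ S ∧ v ∉ S) := by
  classical
  simp only [switch_neg_eq_false_iff]
  constructor
  · rintro ⟨s, hs⟩
    exact ⟨{v | s v = true}, by simpa using hs⟩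
  · rintro ⟨S, hS⟩
    exact ⟨fun v => decide (v ∈ S), by simpa using hS⟩

end SGraph

/-- a signed graph is balanced iff some switching makes every edge
positive, iff the set of negative edges is an edge cut. -/
theorem stmt6 {V : Type} (G : SGraph V) :
    (G.IsBalanced ↔ ∃ s : V → Bool, ∀ e : G.E, (G.switch s).neg e = false) ∧
    (G.IsBalanced ↔ ∃ S : Set V, ∀ e : G.E,
      (G.neg e = true ↔ ∃ u v : V, G.ends e = s(u, v) ∧ u ∈ S ∧ v ∉ S)) :=
  ⟨isBalanced_iff_exists_switch_pos,
    isBalanced_iff_exists_switch_pos.trans exists_switch_pos_iff_exists_cut⟩
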